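/- For t ∈ ℝ \ ℤ_{≥0} and λ > 0, the t-deformed cumulant transform of the t-deformed Laguerre series L_λ^{(t)}(z) := 1 + Σ_{k≥1} (−1)^k ((λt)_k (t)_k / (t^k k!)) z^k satisfies C^t[L_λ^{(t)}](z) = λz/(1−z) as formal power series; equivalently, κ_n^t(L_λ^{(t)}) = λ for all n ≥ 1. Consequently, for all λ_1, λ_2 > 0 one has L_{λ_1}^{(t)} ⊞^t L_{λ_2}^{(t)} = L_{λ_1+λ_2}^{(t)}. -/

import Mathlib

/-!
`E^t` turns `⊞^t` into the ordinary product of power series, and it maps `L_λ^{(t)}` to the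
binomial series `(1 - z)^{λt} = ∑ (-1)^k (λt)_k / k! z^k`. The binomial series satisfies
`(1 - z) f' = -λt f`, so its logarithmic derivative is `-λt / (1 - z)`, which gives
`C^t[L_λ^{(t)}] = λz / (1 - z)`. The convolution identity is
`(1 - z)^a (1 - z)^b = (1 - z)^{a+b}`, i.e. the Chu–Vandermonde identity for falling factorials,
pulled back along the injective map `E^t`.
-/

open PowerSeries Finset

/-- Falling factorial `(t)_k = t (t-1) ⋯ (t-k+1)`. -/
noncomputable def ffall (t : ℝ) (k : ℕ) : ℝ := ∏ i ∈ Finset.range k, (t - i)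

/-- The `t`-deformed convolution of formal power series. -/
noncomputable def tconv (t : ℝ) (A B : PowerSeries ℝ) : PowerSeries ℝ :=
  PowerSeries.mk fun k => ∑ p ∈ Finset.HasAntidiagonal.antidiagonal k,
    ffall t k / (ffall t p.1 * ffall t p.2)
      * (PowerSeries.coeff p.1 A) * (PowerSeries.coeff p.2 B)

/-- Formal logarithm of a power series (with constant term 1):
`log A = - Σ_{k ≥ 1} (1 - A)^k / k`. -/
noncomputable def flog (A : PowerSeries ℝ) : PowerSeries ℝ :=
  PowerSeries.mk fun n =>
    -∑ k ∈ Finset.range (n + 1), (PowerSeries.coeff (R := ℝ) n ((1 - A) ^ k)) / k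

/-- Power sums of `A ∈ 1 + zℝ⟦z⟧`, defined by `Σ p_k(A) z^k = -z (d/dz) log A(z)`. -/
noncomputable def powSum (A : PowerSeries ℝ) (k : ℕ) : ℝ :=
  -(k : ℝ) * PowerSeries.coeff k (flog A)

/-- `E^t[A](z) = Σ_k (t^k/(t)_k) a_k z^k`. -/
noncomputable def Et (t : ℝ) (A : PowerSeries ℝ) : PowerSeries ℝ :=
  PowerSeries.mk fun k => t ^ k / ffall t k * PowerSeries.coeff k A

/-- The `t`-deformed cumulant transform `C^t[A](z) = -(z/t)(d/dz) log(E^t[A](z))`. -/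
noncomputable def Ct (t : ℝ) (A : PowerSeries ℝ) : PowerSeries ℝ :=
  PowerSeries.mk fun n => -(1 / t) * ((n : ℝ) * PowerSeries.coeff n (flog (Et t A)))

/-- The `i`-th `t`-deformed cumulant of `A`. -/
noncomputable def kappa (t : ℝ) (A : PowerSeries ℝ) (i : ℕ) : ℝ :=
  PowerSeries.coeff i (Ct t A)

/-- The `t`-deformed Laguerre series
`L_λ^{(t)}(z) = 1 + Σ_{k≥1} (-1)^k ((λt)_k (t)_k / (t^k k!)) z^k`. -/
noncomputable def Lt (t lam : ℝ) : PowerSeries ℝ :=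
  PowerSeries.mk fun k =>
    (-1) ^ k * (ffall (lam * t) k * ffall t k) / (t ^ k * (k.factorial : ℝ))

lemma ffall_eq_smeval (x : ℝ) (k : ℕ) : ffall x k = (descPochhammer ℤ k).smeval x := by
  rw [← Polynomial.aeval_eq_smeval, Polynomial.aeval_def, Polynomial.eval₂_eq_eval_map,
    descPochhammer_map, descPochhammer_eval_eq_prod_range, ffall]

lemma ffall_add (x y : ℝ) (k : ℕ) :
    ffall (x + y) k = ∑ p ∈ antidiagonal k, k.choose p.1 * (ffall x p.1 * ffall y p.2) := by
  simp only [ffall_eq_smeval]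
  exact Ring.descPochhammer_smeval_add k (Commute.all x y)

lemma ffall_succ (x : ℝ) (k : ℕ) : ffall x (k + 1) = ffall x k * (x - k) :=
  prod_range_succ _ _

lemma ffall_ne_zero {t : ℝ} (ht : ∀ n : ℕ, t ≠ n) (k : ℕ) : ffall t k ≠ 0 :=
  prod_ne_zero_iff.2 fun i _ => sub_ne_zero.2 (ht i)

lemma coeff_pow_eq_zero_of_lt {u : ℝ⟦X⟧} (hu : constantCoeff u = 0) {n k : ℕ} (h : n < k) :
    coeff n (u ^ k) = 0 :=
  coeff_of_lt_order _ ((Nat.cast_lt.2 h).trans_le (le_order_pow_of_constantCoeff_eq_zero k hu))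

/-- `-log (1 - X) = ∑ Xᵏ / k`; the junk value `0⁻¹ = 0` supplies the constant term. -/
noncomputable def negLogOneSub : ℝ⟦X⟧ := PowerSeries.mk fun k => (k : ℝ)⁻¹

lemma derivative_negLogOneSub : d⁄dX ℝ negLogOneSub = PowerSeries.mk 1 := by
  ext n
  rw [coeff_derivative, negLogOneSub, coeff_mk, coeff_mk]
  push_cast
  exact inv_mul_cancel₀ (by positivity)

lemma flog_eq_neg_subst {A : ℝ⟦X⟧} (hA : constantCoeff A = 1) :
    flog A = -negLogOneSub.subst (1 - A) := by
  have hu : constantCoeff (1 - A) = 0 := by simp [hA]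
  have hsub : HasSubst (1 - A) := HasSubst.of_constantCoeff_zero' hu
  ext n
  rw [map_neg, coeff_subst' hsub, flog, coeff_mk,
    finsum_eq_sum_of_support_subset (s := range (n + 1))]
  · refine congrArg _ (sum_congr rfl fun k _ => ?_)
    rw [negLogOneSub, coeff_mk, smul_eq_mul, div_eq_inv_mul]
  · intro k hk
    by_contra hkn
    have hnk : n < k := by simpa using hkn
    exact hk (by simp only [coeff_pow_eq_zero_of_lt hu hnk, smul_zero])

lemma mul_derivative_flog {A : ℝ⟦X⟧} (hA : constantCoeff A = 1) :
    A * d⁄dX ℝ (flog A) = d⁄dX ℝ A := by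
  have hsub : HasSubst (1 - A) := HasSubst.of_constantCoeff_zero' (by simp [hA])
  have hinv : A * (PowerSeries.mk 1 : ℝ⟦X⟧).subst (1 - A) = 1 := by
    have h := congrArg (subst (1 - A)) (mk_one_mul_one_sub_eq_one (S := ℝ))
    rw [subst_mul hsub, subst_sub hsub, subst_X hsub, ← map_one (C (R := ℝ)), subst_C] at h
    simpa [mul_comm] using h
  rw [flog_eq_neg_subst hA, map_neg, derivative_subst hsub, derivative_negLogOneSub, map_sub,
    Derivation.map_one_eq_zero, zero_sub]
  simp only [mul_neg, neg_neg]
  rw [← mul_assoc, hinv, one_mul]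

lemma derivative_flog_of_derivative_eq_mul {A B : ℝ⟦X⟧} (hA : constantCoeff A = 1)
    (h : d⁄dX ℝ A = B * A) : d⁄dX ℝ (flog A) = B := by
  have hA0 : A ≠ 0 := fun h0 => by simp [h0] at hA
  exact mul_left_cancel₀ hA0 (by rw [mul_derivative_flog hA, h, mul_comm])

noncomputable def oneSubXPow (a : ℝ) : ℝ⟦X⟧ :=
  PowerSeries.mk fun k => (-1) ^ k * ffall a k / k.factorial

lemma constantCoeff_oneSubXPow (a : ℝ) : constantCoeff (oneSubXPow a) = 1 := by
  simp [oneSubXPow, ← coeff_zero_eq_constantCoeff_apply, ffall]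

lemma oneSubXPow_add (a b : ℝ) : oneSubXPow (a + b) = oneSubXPow a * oneSubXPow b := by
  ext k
  rw [coeff_mul, oneSubXPow, coeff_mk, ffall_add, mul_sum, sum_div]
  refine sum_congr rfl fun ⟨i, j⟩ hij => ?_
  obtain rfl : i + j = k := mem_antidiagonal.1 hij
  have hchoose := Nat.add_choose_mul_factorial_mul_factorial i j
  simp only [oneSubXPow, coeff_mk]
  field_simp
  rw [← hchoose, Nat.choose_symm_add]
  push_cast
  ring

lemma succ_mul_coeff_succ_oneSubXPow (a : ℝ) (n : ℕ) :
    (n + 1) * coeff (n + 1) (oneSubXPow a) = (n - a) * coeff n (oneSubXPow a) := by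
  simp only [oneSubXPow, coeff_mk, ffall_succ, Nat.factorial_succ]
  push_cast
  field_simp
  ring

lemma derivative_oneSubXPow (a : ℝ) :
    d⁄dX ℝ (oneSubXPow a) = C (-a) * PowerSeries.mk 1 * oneSubXPow a := by
  have hode : (1 - X) * d⁄dX ℝ (oneSubXPow a) = C (-a) * oneSubXPow a := by
    ext n
    rw [sub_mul, one_mul, map_sub, coeff_C_mul]
    rcases n with _ | n
    · simpa [coeff_derivative, constantCoeff_oneSubXPow] using
        succ_mul_coeff_succ_oneSubXPow a 0
    · rw [coeff_succ_X_mul, coeff_derivative, coeff_derivative]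
      linear_combination (norm := (push_cast; ring))
        succ_mul_coeff_succ_oneSubXPow a (n + 1)
  calc d⁄dX ℝ (oneSubXPow a) = PowerSeries.mk 1 * (1 - X) * d⁄dX ℝ (oneSubXPow a) := by
        rw [mk_one_mul_one_sub_eq_one, one_mul]
    _ = C (-a) * PowerSeries.mk 1 * oneSubXPow a := by rw [mul_assoc, hode]; ring

lemma succ_mul_coeff_succ_flog_oneSubXPow (a : ℝ) (n : ℕ) :
    (n + 1) * coeff (n + 1) (flog (oneSubXPow a)) = -a := by
  have h := congrArg (coeff n) (derivative_flog_of_derivative_eq_mul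
    (constantCoeff_oneSubXPow a) (derivative_oneSubXPow a))
  rw [coeff_derivative, coeff_C_mul, coeff_mk, Pi.one_apply, mul_one] at h
  rw [mul_comm, h]

lemma Et_Lt {t : ℝ} (ht : ∀ n : ℕ, t ≠ n) (lam : ℝ) :
    Et t (Lt t lam) = oneSubXPow (lam * t) := by
  ext k
  have hf := ffall_ne_zero ht k
  have ht0 : t ≠ 0 := by simpa using ht 0
  simp only [Et, Lt, oneSubXPow, coeff_mk]
  field_simp

lemma Et_tconv {t : ℝ} (ht : ∀ n : ℕ, t ≠ n) (A B : ℝ⟦X⟧) :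
    Et t (tconv t A B) = Et t A * Et t B := by
  ext k
  rw [coeff_mul, Et, coeff_mk, tconv, coeff_mk, mul_sum]
  refine sum_congr rfl fun ⟨i, j⟩ hij => ?_
  obtain rfl : i + j = k := mem_antidiagonal.1 hij
  have hk := ffall_ne_zero ht (i + j)
  have hi := ffall_ne_zero ht i
  have hj := ffall_ne_zero ht j
  simp only [Et, coeff_mk]
  field_simp
  ring

lemma Et_injective {t : ℝ} (ht : ∀ n : ℕ, t ≠ n) : Function.Injective (Et t) := by
  intro A B h
  ext k
  have hk := congrArg (coeff k) h
  have ht0 : t ≠ 0 := by simpa using ht 0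
  simp only [Et, coeff_mk] at hk
  exact mul_left_cancel₀ (div_ne_zero (pow_ne_zero k ht0) (ffall_ne_zero ht k)) hk

lemma Ct_Lt_eq {t : ℝ} (ht : ∀ n : ℕ, t ≠ n) (lam : ℝ) :
    Ct t (Lt t lam) = C lam * (X * PowerSeries.mk 1) := by
  have ht0 : t ≠ 0 := by simpa using ht 0
  ext n
  rw [Ct, coeff_mk, Et_Lt ht, coeff_C_mul]
  rcases n with _ | n
  · simp
  · rw [coeff_succ_X_mul, coeff_mk, Pi.one_apply, mul_one, Nat.cast_succ,
      succ_mul_coeff_succ_flog_oneSubXPow]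
    field_simp

lemma tconv_Lt {t : ℝ} (ht : ∀ n : ℕ, t ≠ n) (lam₁ lam₂ : ℝ) :
    tconv t (Lt t lam₁) (Lt t lam₂) = Lt t (lam₁ + lam₂) := by
  apply Et_injective ht
  rw [Et_tconv ht, Et_Lt ht, Et_Lt ht, Et_Lt ht, add_mul, oneSubXPow_add]

theorem Ct_Lt_general (t : ℝ) (ht : ∀ n : ℕ, t ≠ (n : ℝ)) (lam : ℝ) :
    Ct t (Lt t lam) =
      PowerSeries.C lam * (PowerSeries.X * PowerSeries.mk fun _ => (1 : ℝ)) ∧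
    (∀ n : ℕ, 1 ≤ n → kappa t (Lt t lam) n = lam) ∧
    ∀ lam₁ lam₂ : ℝ, 0 < lam₁ → 0 < lam₂ →
      tconv t (Lt t lam₁) (Lt t lam₂) = Lt t (lam₁ + lam₂) := by
  refine ⟨Ct_Lt_eq ht lam, fun n hn => ?_, fun lam₁ lam₂ _ _ => tconv_Lt ht lam₁ lam₂⟩
  obtain ⟨m, rfl⟩ := Nat.exists_eq_add_of_le' hn
  rw [kappa, Ct_Lt_eq ht, coeff_C_mul, coeff_succ_X_mul, coeff_mk, Pi.one_apply, mul_one]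

/-- `C^t[L_λ^{(t)}](z) = λz/(1-z)`; equivalently `κ_n^t(L_λ^{(t)}) = λ` for all `n ≥ 1`.
Consequently `L_{λ₁}^{(t)} ⊞^t L_{λ₂}^{(t)} = L_{λ₁+λ₂}^{(t)}`. -/
theorem Ct_Lt (t : ℝ) (ht : ∀ n : ℕ, t ≠ (n : ℝ)) (lam : ℝ) (hlam : 0 < lam) :
    Ct t (Lt t lam) =
      PowerSeries.C lam * (PowerSeries.X * PowerSeries.mk fun _ => (1 : ℝ)) ∧
    (∀ n : ℕ, 1 ≤ n → kappa t (Lt t lam) n = lam) ∧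
    ∀ lam₁ lam₂ : ℝ, 0 < lam₁ → 0 < lam₂ →
      tconv t (Lt t lam₁) (Lt t lam₂) = Lt t (lam₁ + lam₂) :=
  Ct_Lt_general t ht lam
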